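/- Let M_1 = (E, I_1), …, M_k = (E, I_k) be matroids on a common finite ground set E partitioned among n players, with feasible sets I = I_1 ∩ … ∩ I_k, and let each player i have an XOS valuation v_i : 2^{E_i} → ℝ≥0. Then there exist deviation bid profiles b*_i : E_i → ℝ≥0 (depending only on the valuation profile v) such that for every bid profile b : E → ℝ≥0, every S ∈ I maximizing Σ_{t∈S} b_t over I, and, for each i, every S^i ∈ I maximizing total weight under the profile that equals b*_i on E_i and b on E ∖ E_i, the following holds: Σ_{i=1}^n [ v_i(S^i ∩ E_i) − Σ_{t∈S^i∩E_i} b*_i(t) ] ≥ (1/(k+2))·OPT(v) − Σ_{t∈S} b_t. (The optimal first-price mechanism over the intersection of k matroids is (1/(k+2), 1)-smooth for XOS valuations.) -/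

import Mathlib

/-!
Player `i` deviates by bidding `(k + 1) / (k + 2)` times an additive valuation that supports
`v_i` at its share `O_i` of the optimum. In each matroid, the greedy completion of `O_i` by the
winning set `S`, scanned by decreasing bid, displaces bids of total weight at most `b(S)` when
summed over all players (nullity is supermodular). Keeping only what survives in all `k`
matroids, the deviation set completing `O_i` is feasible, so by optimality of the deviation
each player wins `(k+1)/(k+2) · v_i(O_i)` up to `b(S ∖ K_i) + b(S ∩ E_i)`, and these losses sum
to at most `(k + 1) b(S)`. XOS makes the price paid at most `(k+1)/(k+2)` of the value received,
so the utility is at least a `1/(k+1)` fraction of the price, which gives the bound.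
-/

/-- A matroid on a finite ground set, given by its family of independent sets. -/
structure FinMatroid (E : Type*) [DecidableEq E] [Fintype E] where
  Indep : Finset E → Prop
  empty_indep : Indep ∅
  indep_subset : ∀ ⦃A B : Finset E⦄, Indep B → A ⊆ B → Indep A
  indep_exchange : ∀ ⦃A B : Finset E⦄, Indep A → Indep B → A.card < B.card →
    ∃ x ∈ B \ A, Indep (insert x A)

/-- `v` is an XOS (fractionally subadditive) valuation: a pointwise maximum of a
finite nonempty family of additive valuations with nonnegative weights. -/
def IsXOS {E : Type*} [DecidableEq E] (v : Finset E → ℝ) : Prop :=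
  ∃ L : Finset (E → ℝ), L.Nonempty ∧ (∀ w ∈ L, ∀ t, 0 ≤ w t) ∧
    ∀ X : Finset E, (∃ w ∈ L, v X = ∑ t ∈ X, w t) ∧ (∀ w ∈ L, ∑ t ∈ X, w t ≤ v X)

open Finset Function

namespace List

variable {α : Type*} {a c : α → ℝ}

/-- The induction carries the slack `A` of the prefix already read, worth at most `B` at the
remaining weights. -/
lemma sum_map_mul_le_add_sum_map {l : List α} (hl : l.Pairwise fun x y => c y ≤ c x)
    (hc : ∀ x ∈ l, 0 ≤ c x) {A B : ℝ} (hA : 0 ≤ A) (hB : 0 ≤ B) (hAB : ∀ x ∈ l, A * c x ≤ B)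
    (ha : ∀ p, p <+: l → (p.map a).sum ≤ A + p.length) :
    (l.map fun x => a x * c x).sum ≤ B + (l.map c).sum := by
  induction l generalizing A B with
  | nil => simpa using hB
  | cons x l ih =>
    obtain ⟨hx, hl⟩ := List.pairwise_cons.mp hl
    have hax : a x ≤ A + 1 := by simpa using ha [x] (List.cons_prefix_cons.mpr ⟨rfl, nil_prefix⟩)
    have hA' : 0 ≤ A + 1 - a x := by linarith
    have ih' := ih hl (fun y hy => hc y (mem_cons_of_mem x hy)) hA'
      (mul_nonneg hA' (hc x mem_cons_self)) (fun y hy => mul_le_mul_of_nonneg_left (hx y hy) hA')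
      fun p hp => by
        have := ha (x :: p) (List.cons_prefix_cons.mpr ⟨rfl, hp⟩)
        simp only [map_cons, sum_cons, length_cons, Nat.cast_succ] at this
        linarith
    simp only [map_cons, sum_cons]
    nlinarith [hAB x mem_cons_self]

lemma sum_map_mul_le_sum_map {l : List α} (hl : l.Pairwise fun x y => c y ≤ c x)
    (hc : ∀ x ∈ l, 0 ≤ c x) (ha : ∀ p, p <+: l → (p.map a).sum ≤ p.length) :
    (l.map fun x => a x * c x).sum ≤ (l.map c).sum := by
  simpa using sum_map_mul_le_add_sum_map hl hc le_rfl le_rfl (by simp)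
    (A := 0) (B := 0) (by simpa using ha)

end List

lemma IsXOS.exists_supporting {E : Type*} [DecidableEq E] {v : Finset E → ℝ} (hv : IsXOS v)
    (X : Finset E) :
    ∃ w : E → ℝ, (∀ t, 0 ≤ w t) ∧ v X = ∑ t ∈ X, w t ∧ ∀ Y, ∑ t ∈ Y, w t ≤ v Y := by
  obtain ⟨L, -, hL0, hL⟩ := hv
  obtain ⟨w, hwL, hwX⟩ := (hL X).1
  exact ⟨w, hL0 w hwL, hwX, fun Y => (hL Y).2 w hwL⟩

lemma Finset.sum_sum_sdiff_eq_sum_card_smul {E ι M : Type*} [DecidableEq E] [Fintype ι]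
    [AddCommMonoid M] (S : Finset E) (G : ι → Finset E) (f : E → M) :
    ∑ i, ∑ t ∈ S \ G i, f t = ∑ t ∈ S, #{i | t ∉ G i} • f t := by
  simp_rw [sdiff_eq_filter, sum_filter, card_eq_sum_ones, sum_smul, one_smul, sum_filter]
  exact sum_comm

lemma Finset.exists_list_pairwise_ge {E : Type*} [DecidableEq E] (S : Finset E) (b : E → ℝ) :
    ∃ l : List E, l.Nodup ∧ l.toFinset = S ∧ l.Pairwise fun x y => b y ≤ b x := by
  have hperm := S.toList.mergeSort_perm fun x y => decide (b y ≤ b x)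
  refine ⟨_, hperm.nodup_iff.mpr S.nodup_toList,
    by rw [List.toFinset_eq_of_perm _ _ hperm, toList_toFinset], ?_⟩
  simpa using List.pairwise_mergeSort (le := fun x y => decide (b y ≤ b x))
    (fun x y z hxy hyz => by simp only [decide_eq_true_eq] at *; linarith)
    (fun x y => by simpa using le_total (b y) (b x)) S.toList

namespace FinMatroid

variable {E : Type*} [DecidableEq E] [Fintype E] (M : FinMatroid E)

lemma exists_maximal {A G : Finset E} (hA : M.Indep A) (hAG : A ⊆ G) :
    ∃ W, A ⊆ W ∧ W ⊆ G ∧ M.Indep W ∧ ∀ x ∈ G, x ∉ W → ¬ M.Indep (insert x W) := by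
  classical
  obtain ⟨W, hW, hWmax⟩ := exists_max_image {W ∈ G.powerset | A ⊆ W ∧ M.Indep W} card
    ⟨A, by simp [hAG, hA]⟩
  simp only [mem_filter, mem_powerset] at hW hWmax
  refine ⟨W, hW.2.1, hW.1, hW.2.2, fun x hxG hxW hx => ?_⟩
  have := hWmax (insert x W) ⟨insert_subset hxG hW.1, hW.2.1.trans (subset_insert x W), hx⟩
  rw [card_insert_of_notMem hxW] at this
  omega

lemma card_le_of_maximal {G W V : Finset E} (hW : M.Indep W)
    (hWmax : ∀ x ∈ G, x ∉ W → ¬ M.Indep (insert x W)) (hVG : V ⊆ G) (hV : M.Indep V) :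
    #V ≤ #W := by
  by_contra! h
  obtain ⟨x, hx, hxW⟩ := M.indep_exchange hW hV h
  rw [mem_sdiff] at hx
  exact hWmax x (hVG hx.1) hx.2 hxW

open Classical in
noncomputable def rk (G : Finset E) : ℕ :=
  {V ∈ G.powerset | M.Indep V}.sup card

lemma card_le_rk {G V : Finset E} (hVG : V ⊆ G) (hV : M.Indep V) : #V ≤ M.rk G := by
  classical
  exact le_sup (f := card) (by simp [hVG, hV])

lemma rk_le_card (G : Finset E) : M.rk G ≤ #G := by
  classical
  exact Finset.sup_le fun V hV => card_le_card (mem_powerset.mp (mem_filter.mp hV).1)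

lemma rk_eq_card_of_maximal {G W : Finset E} (hWG : W ⊆ G) (hW : M.Indep W)
    (hWmax : ∀ x ∈ G, x ∉ W → ¬ M.Indep (insert x W)) : M.rk G = #W := by
  classical
  refine le_antisymm (Finset.sup_le fun V hV => ?_) (M.card_le_rk hWG hW)
  simp only [mem_filter, mem_powerset] at hV
  exact M.card_le_of_maximal hW hWmax hV.1 hV.2

lemma rk_eq_card_of_indep {A : Finset E} (hA : M.Indep A) : M.rk A = #A :=
  M.rk_eq_card_of_maximal subset_rfl hA fun _ hx hxA => absurd hx hxA

lemma rk_union_add_rk_inter_le (X Y : Finset E) :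
    M.rk (X ∪ Y) + M.rk (X ∩ Y) ≤ M.rk X + M.rk Y := by
  obtain ⟨I, -, hI, hIind, hImax⟩ := M.exists_maximal M.empty_indep (empty_subset (X ∩ Y))
  obtain ⟨B, hIB, hB, hBind, hBmax⟩ := M.exists_maximal hIind (hI.trans inter_subset_union)
  have hBI : B ∩ (X ∩ Y) = I := by
    refine Subset.antisymm (fun x hx => ?_) (subset_inter hIB hI)
    rw [mem_inter] at hx
    by_contra hxI
    exact hImax x hx.2 hxI (M.indep_subset hBind (insert_subset hx.1 hIB))
  have hBX := M.card_le_rk (inter_subset_right (s₁ := B) (s₂ := X))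
    (M.indep_subset hBind inter_subset_left)
  have hBY := M.card_le_rk (inter_subset_right (s₁ := B) (s₂ := Y))
    (M.indep_subset hBind inter_subset_left)
  have hcard := card_union_add_card_inter (B ∩ X) (B ∩ Y)
  rw [← inter_union_distrib_left, inter_eq_left.mpr hB, ← inter_inter_distrib_left, hBI] at hcard
  rw [M.rk_eq_card_of_maximal hB hBind hBmax, M.rk_eq_card_of_maximal hI hIind hImax]
  omega

/-- The subtraction never truncates, by `rk_le_card`. -/
noncomputable def nullity (X : Finset E) : ℕ := #X - M.rk X

lemma nullity_add_nullity_le (X Y : Finset E) :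
    M.nullity X + M.nullity Y ≤ M.nullity (X ∪ Y) + M.nullity (X ∩ Y) := by
  have := M.rk_union_add_rk_inter_le X Y
  have := card_union_add_card_inter X Y
  have := M.rk_le_card X
  have := M.rk_le_card Y
  have := M.rk_le_card (X ∪ Y)
  have := M.rk_le_card (X ∩ Y)
  unfold nullity
  omega

lemma sum_nullity_union_le {ι : Type*} {P : Finset E} (hP : M.Indep P) {Y : ι → Finset E}
    (hY : Pairwise (Disjoint on Y)) (s : Finset ι) :
    ∑ i ∈ s, M.nullity (P ∪ Y i) ≤ M.nullity (P ∪ s.biUnion Y) := by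
  classical
  induction s using Finset.induction_on with
  | empty => simp
  | insert i s hi ih =>
    have hdisj : Disjoint (Y i) (s.biUnion Y) :=
      (disjoint_biUnion_right _ _ _).mpr fun j hj => hY (ne_of_mem_of_not_mem hj hi).symm
    have key := M.nullity_add_nullity_le (P ∪ Y i) (P ∪ s.biUnion Y)
    rw [← union_union_distrib_left, ← union_inter_distrib_left,
      disjoint_iff_inter_eq_empty.mp hdisj, union_empty] at key
    rw [sum_insert hi, biUnion_insert]
    have : M.nullity P = 0 := by simp [nullity, M.rk_eq_card_of_indep hP]
    omega

lemma nullity_union_le_card (P : Finset E) {O : Finset E} (hO : M.Indep O) :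
    M.nullity (P ∪ O) ≤ #P := by
  have := M.card_le_rk (G := P ∪ O) subset_union_right hO
  have := card_union_le P O
  unfold nullity
  omega

open Classical in
noncomputable def greedy (A : Finset E) (l : List E) : Finset E :=
  l.foldl (fun B x => if M.Indep (insert x B) then insert x B else B) A

open Classical in
lemma greedy_cons (A : Finset E) (x : E) (l : List E) :
    M.greedy A (x :: l) = M.greedy (if M.Indep (insert x A) then insert x A else A) l := rfl

lemma greedy_append (A : Finset E) (p q : List E) :
    M.greedy A (p ++ q) = M.greedy (M.greedy A p) q :=
  List.foldl_append

lemma subset_greedy (A : Finset E) (l : List E) : A ⊆ M.greedy A l := by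
  induction l generalizing A with
  | nil => exact subset_rfl
  | cons x l ih =>
    rw [greedy_cons]
    split_ifs
    exacts [(subset_insert x A).trans (ih (insert x A)), ih A]

lemma greedy_subset (A : Finset E) (l : List E) : M.greedy A l ⊆ A ∪ l.toFinset := by
  induction l generalizing A with
  | nil => simp [greedy]
  | cons x l ih =>
    rw [greedy_cons]
    refine (ih _).trans ?_
    split_ifs <;> intro t <;> simp only [mem_union, mem_insert, List.toFinset_cons] <;> tauto

lemma indep_greedy {A : Finset E} (hA : M.Indep A) (l : List E) : M.Indep (M.greedy A l) := by
  induction l generalizing A with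
  | nil => exact hA
  | cons x l ih =>
    rw [greedy_cons]
    split_ifs with h
    exacts [ih h, ih hA]

lemma greedy_maximal (A : Finset E) (l : List E) :
    ∀ x ∈ l, x ∉ M.greedy A l → ¬ M.Indep (insert x (M.greedy A l)) := by
  induction l generalizing A with
  | nil => simp
  | cons y l ih =>
    intro x hx hxG hxI
    rw [greedy_cons] at hxG hxI
    rcases List.mem_cons.mp hx with rfl | hx
    · split_ifs at hxG hxI with h
      · exact hxG (M.subset_greedy _ l (mem_insert_self x A))
      · exact h (M.indep_subset hxI (insert_subset_insert x (M.subset_greedy A l)))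
    · exact ih _ x hx hxG hxI

lemma card_sdiff_greedy {A : Finset E} (hA : M.Indep A) (l : List E) :
    #(l.toFinset \ M.greedy A l) = M.nullity (l.toFinset ∪ A) := by
  have hAG := M.subset_greedy A l
  have hGsub : M.greedy A l ⊆ l.toFinset ∪ A :=
    (M.greedy_subset A l).trans (union_comm A _).subset
  have hrk : M.rk (l.toFinset ∪ A) = #(M.greedy A l) := by
    refine M.rk_eq_card_of_maximal hGsub (M.indep_greedy hA l) fun x hx hxG => ?_
    have hxl : x ∈ l := by
      simpa [mem_union, List.mem_toFinset, show x ∉ A from fun h => hxG (hAG h)] using hx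
    exact M.greedy_maximal A l x hxl hxG
  have hsd : l.toFinset \ M.greedy A l = (l.toFinset ∪ A) \ M.greedy A l := by
    rw [union_sdiff_distrib, sdiff_eq_empty_iff_subset.mpr hAG, union_empty]
  rw [hsd, card_sdiff_of_subset hGsub, nullity, hrk]

lemma sdiff_greedy_append (A : Finset E) {p q : List E} (hpq : (p ++ q).Nodup) :
    p.toFinset \ M.greedy A (p ++ q) = p.toFinset \ M.greedy A p := by
  rw [greedy_append]
  refine Subset.antisymm (sdiff_subset_sdiff subset_rfl (M.subset_greedy _ q)) fun x hx => ?_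
  rw [mem_sdiff] at hx ⊢
  refine ⟨hx.1, fun hxG => ?_⟩
  rcases mem_union.mp (M.greedy_subset _ q hxG) with h | h
  · exact hx.2 h
  · exact List.disjoint_of_nodup_append hpq (List.mem_toFinset.mp hx.1) (List.mem_toFinset.mp h)

variable {ι : Type*} [Fintype ι] {Y : ι → Finset E}

lemma sum_card_sdiff_greedy_le (hY : Pairwise (Disjoint on Y)) (hYI : M.Indep (univ.biUnion Y))
    {p q : List E} (hpq : (p ++ q).Nodup) (hp : M.Indep p.toFinset) :
    ∑ i, #(p.toFinset \ M.greedy (Y i) (p ++ q)) ≤ p.length := by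
  have hYi i : M.Indep (Y i) := M.indep_subset hYI (subset_biUnion_of_mem Y (mem_univ i))
  calc ∑ i, #(p.toFinset \ M.greedy (Y i) (p ++ q))
      = ∑ i, M.nullity (p.toFinset ∪ Y i) := by
        simp_rw [M.sdiff_greedy_append _ hpq, M.card_sdiff_greedy (hYi _)]
    _ ≤ M.nullity (p.toFinset ∪ univ.biUnion Y) := M.sum_nullity_union_le hp hY univ
    _ ≤ #p.toFinset := M.nullity_union_le_card _ hYI
    _ ≤ p.length := List.toFinset_card_le p

/-- `K i` is what the greedy algorithm started at `Y i` keeps of `S`, scanned by decreasing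
weight: along every prefix the rejections are counted by nullities, whose sum over the
players is at most the length of the prefix; Abel summation turns this into weights. -/
theorem exists_sum_sdiff_le {S : Finset E} (hS : M.Indep S) (hY : Pairwise (Disjoint on Y))
    (hYI : M.Indep (univ.biUnion Y)) {b : E → ℝ} (hb : ∀ t, 0 ≤ b t) :
    ∃ K : ι → Finset E, (∀ i, K i ⊆ S ∧ M.Indep (K i ∪ Y i)) ∧
      ∑ i, ∑ t ∈ S \ K i, b t ≤ ∑ t ∈ S, b t := by
  obtain ⟨l, hl, rfl, hsorted⟩ := S.exists_list_pairwise_ge b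
  have hYi i : M.Indep (Y i) := M.indep_subset hYI (subset_biUnion_of_mem Y (mem_univ i))
  refine ⟨fun i => l.toFinset ∩ M.greedy (Y i) l, fun i => ⟨inter_subset_left,
    M.indep_subset (M.indep_greedy (hYi i) l) (union_subset inter_subset_right
      (M.subset_greedy _ l))⟩, ?_⟩
  simp only [sdiff_inter_self_left]
  rw [sum_sum_sdiff_eq_sum_card_smul, List.sum_toFinset _ hl, List.sum_toFinset _ hl]
  simp only [nsmul_eq_mul]
  refine List.sum_map_mul_le_sum_map hsorted (fun x _ => hb x) fun p ⟨q, hpq⟩ => ?_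
  subst hpq
  have hp : p.Nodup := hl.sublist (List.sublist_append_left p q)
  have hcount := M.sum_card_sdiff_greedy_le hY hYI hl
    (M.indep_subset hS (List.toFinset_append (l := p) (l' := q) ▸ subset_union_left))
  have hdouble := sum_sum_sdiff_eq_sum_card_smul p.toFinset
    (fun i => M.greedy (Y i) (p ++ q)) fun _ => (1 : ℕ)
  simp only [sum_const, smul_eq_mul, mul_one] at hdouble
  rw [← List.sum_toFinset _ hp]
  exact_mod_cast hdouble ▸ hcount

/-- Intersecting the completions obtained in each of the matroids displaces each element of `S`
at most once per matroid. -/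
theorem exists_sum_sdiff_le_card_mul {κ : Type*} [Fintype κ] (Ms : κ → FinMatroid E)
    {S : Finset E} (hS : ∀ j, (Ms j).Indep S) (hY : Pairwise (Disjoint on Y))
    (hYI : ∀ j, (Ms j).Indep (univ.biUnion Y)) {b : E → ℝ} (hb : ∀ t, 0 ≤ b t) :
    ∃ K : ι → Finset E, (∀ i, K i ⊆ S ∧ ∀ j, (Ms j).Indep (K i ∪ Y i)) ∧
      ∑ i, ∑ t ∈ S \ K i, b t ≤ Fintype.card κ * ∑ t ∈ S, b t := by
  choose K hK hKsum using fun j => (Ms j).exists_sum_sdiff_le (hS j) hY (hYI j) hb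
  refine ⟨fun i => {t ∈ S | ∀ j, t ∈ K j i}, fun i => ⟨filter_subset _ _, fun j =>
    (Ms j).indep_subset (hK j i).2 (union_subset_union (fun t ht => (mem_filter.mp ht).2 j)
      subset_rfl)⟩, ?_⟩
  have hle i : ∑ t ∈ S \ {t ∈ S | ∀ j, t ∈ K j i}, b t ≤ ∑ j, ∑ t ∈ S \ K j i, b t := by
    rw [sum_sum_sdiff_eq_sum_card_smul]
    refine (sum_le_sum fun t ht => ?_).trans (sum_le_sum_of_subset_of_nonneg sdiff_subset
      fun t _ _ => nsmul_nonneg (hb t) _)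
    obtain ⟨j, hj⟩ : ∃ j, t ∉ K j i := by simpa [(mem_sdiff.mp ht).1] using (mem_sdiff.mp ht).2
    have : 1 ≤ #{j | t ∉ K j i} := card_pos.mpr ⟨j, by simpa using hj⟩
    simpa using le_mul_of_one_le_left (hb t) (by exact_mod_cast this)
  calc ∑ i, ∑ t ∈ S \ {t ∈ S | ∀ j, t ∈ K j i}, b t
      ≤ ∑ i, ∑ j, ∑ t ∈ S \ K j i, b t := sum_le_sum fun i _ => hle i
    _ = ∑ j, ∑ i, ∑ t ∈ S \ K j i, b t := sum_comm
    _ ≤ ∑ _j : κ, ∑ t ∈ S, b t := sum_le_sum fun j _ => hKsum j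
    _ = Fintype.card κ * ∑ t ∈ S, b t := by simp

end FinMatroid

lemma sum_le_of_deviation {E ι : Type*} [DecidableEq E] [DecidableEq ι]
    {F : Finset E → Prop} (player : E → ι) (i : ι) {b β : E → ℝ}
    (hb : ∀ t, 0 ≤ b t) (hβ : ∀ t, 0 ≤ β t) {S D K X : Finset E}
    (hSmax : ∀ S', F S' → ∑ t ∈ S', b t ≤ ∑ t ∈ S, b t) (hD : F D)
    (hDmax : ∀ S', F S' → ∑ t ∈ S', (if player t = i then β t else b t) ≤
      ∑ t ∈ D, if player t = i then β t else b t)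
    (hX : ∀ t ∈ X, player t = i) (hKX : F (K ∪ X)) :
    ∑ t ∈ X, β t ≤ ∑ t ∈ D with player t = i, β t + ∑ t ∈ S \ K, b t +
      ∑ t ∈ S with player t = i, b t := by
  have hdev := hDmax _ hKX
  rw [sum_ite, sum_ite] at hdev
  have hXown : ∑ t ∈ X, β t ≤ ∑ t ∈ K ∪ X with player t = i, β t :=
    sum_le_sum_of_subset_of_nonneg (fun t ht => by simp [ht, hX t ht]) fun t _ _ => hβ t
  have hKothers : ∑ t ∈ K with ¬player t = i, b t ≤ ∑ t ∈ K ∪ X with ¬player t = i, b t :=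
    sum_le_sum_of_subset_of_nonneg (filter_subset_filter _ subset_union_left) fun t _ _ => hb t
  have hDothers : ∑ t ∈ D with ¬player t = i, b t ≤ ∑ t ∈ S, b t :=
    (sum_le_sum_of_subset_of_nonneg (filter_subset _ D) fun t _ _ => hb t).trans (hSmax D hD)
  have hSothers : ∑ t ∈ S with ¬player t = i, b t ≤
      ∑ t ∈ K with ¬player t = i, b t + ∑ t ∈ S \ K, b t := by
    rw [← sum_union (disjoint_sdiff.mono_left (filter_subset _ K))]
    refine sum_le_sum_of_subset_of_nonneg (fun t ht => ?_) fun t _ _ => hb t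
    rw [mem_filter] at ht
    by_cases htK : t ∈ K <;> simp [ht, htK]
  have hSsplit := sum_filter_add_sum_filter_not S (fun t => player t = i) b
  linarith

/-- The deviation wins `α v(O)` up to the displaced bids, and since `w ≤ v` its price is at
most `α` times the value received. -/
lemma one_sub_mul_le_mul_utility {E ι : Type*} [DecidableEq E] [DecidableEq ι]
    {F : Finset E → Prop} (player : E → ι) (i : ι) {v : Finset E → ℝ} {w : E → ℝ}
    (hw0 : ∀ t, 0 ≤ w t) (hwle : ∀ Y, ∑ t ∈ Y, w t ≤ v Y) {O : Finset E}
    (hwO : v O = ∑ t ∈ O, w t) (hO : ∀ t ∈ O, player t = i) {α : ℝ} (hα0 : 0 ≤ α)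
    (hα1 : α ≤ 1) {b : E → ℝ} (hb : ∀ t, 0 ≤ b t) {S D K : Finset E}
    (hSmax : ∀ S', F S' → ∑ t ∈ S', b t ≤ ∑ t ∈ S, b t) (hD : F D)
    (hDmax : ∀ S', F S' →
      ∑ t ∈ S', (if player t = i then (if t ∈ O then α * w t else 0) else b t) ≤
        ∑ t ∈ D, if player t = i then (if t ∈ O then α * w t else 0) else b t)
    (hKO : F (K ∪ O)) :
    (1 - α) * (α * v O - (∑ t ∈ S \ K, b t + ∑ t ∈ S with player t = i, b t)) ≤
      α * (v {t ∈ D | player t = i} -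
        ∑ t ∈ D with player t = i, if t ∈ O then α * w t else 0) := by
  have hβ t : 0 ≤ if t ∈ O then α * w t else 0 := by
    split_ifs
    exacts [mul_nonneg hα0 (hw0 t), le_rfl]
  have hvalue : ∑ t ∈ O, (if t ∈ O then α * w t else 0) = α * v O := by
    rw [hwO, mul_sum]
    exact sum_congr rfl fun t ht => if_pos ht
  have hgain := sum_le_of_deviation player i hb hβ hSmax hD hDmax hO hKO
  rw [hvalue] at hgain
  have hprice : ∑ t ∈ D with player t = i, (if t ∈ O then α * w t else 0) ≤
      α * v {t ∈ D | player t = i} := by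
    refine (sum_le_sum fun t _ => ?_).trans ((mul_sum _ _ _).symm.le.trans
      (mul_le_mul_of_nonneg_left (hwle _) hα0))
    split_ifs
    exacts [le_rfl, mul_nonneg hα0 (hw0 t)]
  nlinarith [mul_le_mul_of_nonneg_left hgain (sub_nonneg.mpr hα1)]

theorem optimal_intersection_smooth_xos_general
    {E : Type*} [DecidableEq E] [Fintype E]
    (k : ℕ) (Ms : Fin k → FinMatroid E)
    (n : ℕ) (player : E → Fin n)
    (v : Fin n → Finset E → ℝ) (hv : ∀ i, IsXOS (v i))
    (Sopt : Finset E) (hSopt : ∀ j, (Ms j).Indep Sopt) :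
    ∃ bstar : Fin n → E → ℝ, (∀ i t, 0 ≤ bstar i t) ∧
      ∀ b : E → ℝ, (∀ t, 0 ≤ b t) →
      ∀ S : Finset E, (∀ j, (Ms j).Indep S) →
        (∀ S' : Finset E, (∀ j, (Ms j).Indep S') → ∑ t ∈ S', b t ≤ ∑ t ∈ S, b t) →
      ∀ Sdev : Fin n → Finset E,
        (∀ i, (∀ j, (Ms j).Indep (Sdev i)) ∧
          ∀ S' : Finset E, (∀ j, (Ms j).Indep S') →
            (∑ t ∈ S', if player t = i then bstar i t else b t) ≤
              ∑ t ∈ Sdev i, if player t = i then bstar i t else b t) →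
        (∑ i : Fin n, (v i ((Sdev i).filter (fun t => player t = i)) -
            ∑ t ∈ (Sdev i).filter (fun t => player t = i), bstar i t)) ≥
          (1/(k+2) : ℝ) * (∑ i : Fin n, v i (Sopt.filter (fun t => player t = i))) -
            ∑ t ∈ S, b t := by
  choose w hw0 hwO hwle using fun i => (hv i).exists_supporting {t ∈ Sopt | player t = i}
  set α : ℝ := (k + 1) / (k + 2) with hα
  have hα0 : 0 < α := by positivity
  have hα1 : α ≤ 1 := div_le_one_of_le₀ (by linarith) (by positivity)
  refine ⟨fun i t => if t ∈ {t ∈ Sopt | player t = i} then α * w i t else 0,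
    fun i t => by dsimp only; split_ifs; exacts [mul_nonneg hα0.le (hw0 i t), le_rfl], ?_⟩
  intro b hb S hS hSmax Sdev hdev
  obtain ⟨K, hK, hKsum⟩ := FinMatroid.exists_sum_sdiff_le_card_mul Ms hS
    (Y := fun i => {t ∈ Sopt | player t = i})
    (fun i j hij => disjoint_filter.mpr fun t _ hi hj => hij (hi ▸ hj))
    (fun j => (Ms j).indep_subset (hSopt j) (biUnion_subset.mpr fun i _ => filter_subset _ _)) hb
  have hsum := sum_le_sum fun i (_ : i ∈ univ) =>
    one_sub_mul_le_mul_utility player i (hw0 i) (hwle i) (hwO i)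
      (fun t ht => (mem_filter.mp ht).2) hα0.le hα1 hb hSmax (hdev i).1 (hdev i).2 (hK i).2
  rw [← mul_sum, ← mul_sum, sum_sub_distrib, ← mul_sum, sum_add_distrib, sum_fiberwise] at hsum
  rw [Fintype.card_fin] at hKsum
  refine le_of_mul_le_mul_left ?_ hα0
  calc α * (1 / (k + 2) * ∑ i, v i {t ∈ Sopt | player t = i} - ∑ t ∈ S, b t)
      = (1 - α) * (α * ∑ i, v i {t ∈ Sopt | player t = i} - (k + 1) * ∑ t ∈ S, b t) := by
        rw [hα]; field_simp; ring
    _ ≤ _ := mul_le_mul_of_nonneg_left (by linarith) (sub_nonneg.mpr hα1)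
    _ ≤ _ := hsum

/-- **Smoothness of the optimal first-price mechanism over an intersection of `k`
matroids for XOS valuations.**  `Ms j` (`j : Fin k`) are matroids on the common
ground set `E`, whose common independent sets form the feasible family; the ground
set is partitioned among `n` players via `player : E → Fin n`, each with an XOS
valuation.  `Sopt` is a welfare-optimal common independent set, so
`OPT(v) = Σ_i v_i(Sopt ∩ E_i)`.  There exist deviation bids `bstar i` (depending only
on the valuations) such that for every nonnegative bid profile `b`, every max-weight
common independent set `S` for `b` and, for each `i`, every max-weight common
independent set `Sdev i` for the profile where `i` deviates to `bstar i`: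
`Σ_i [v_i(Sdev i ∩ E_i) − Σ_{t∈Sdev i ∩ E_i} bstar i t] ≥ (1/(k+2))·OPT(v) − Σ_{t∈S} b_t`,
i.e. the mechanism is `(1/(k+2), 1)`-smooth. -/
theorem optimal_intersection_smooth_xos
    {E : Type*} [DecidableEq E] [Fintype E]
    (k : ℕ) (Ms : Fin k → FinMatroid E)
    (n : ℕ) (player : E → Fin n)
    (v : Fin n → Finset E → ℝ) (hv : ∀ i, IsXOS (v i))
    (Sopt : Finset E) (hSopt : ∀ j, (Ms j).Indep Sopt)
    (hSoptOpt : ∀ S : Finset E, (∀ j, (Ms j).Indep S) →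
      (∑ i : Fin n, v i (S.filter (fun t => player t = i))) ≤
        ∑ i : Fin n, v i (Sopt.filter (fun t => player t = i))) :
    ∃ bstar : Fin n → E → ℝ, (∀ i t, 0 ≤ bstar i t) ∧
      ∀ b : E → ℝ, (∀ t, 0 ≤ b t) →
      ∀ S : Finset E, (∀ j, (Ms j).Indep S) →
        (∀ S' : Finset E, (∀ j, (Ms j).Indep S') → ∑ t ∈ S', b t ≤ ∑ t ∈ S, b t) →
      ∀ Sdev : Fin n → Finset E,
        (∀ i, (∀ j, (Ms j).Indep (Sdev i)) ∧
          ∀ S' : Finset E, (∀ j, (Ms j).Indep S') →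
            (∑ t ∈ S', if player t = i then bstar i t else b t) ≤
              ∑ t ∈ Sdev i, if player t = i then bstar i t else b t) →
        (∑ i : Fin n, (v i ((Sdev i).filter (fun t => player t = i)) -
            ∑ t ∈ (Sdev i).filter (fun t => player t = i), bstar i t)) ≥
          (1/(k+2) : ℝ) * (∑ i : Fin n, v i (Sopt.filter (fun t => player t = i))) -
            ∑ t ∈ S, b t :=
  optimal_intersection_smooth_xos_general k Ms n player v hv Sopt hSopt
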